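/- arXiv:1812.06635 — 4 statements merged into one kernel-verified Lean document; each statement's English description precedes it below -/
import Mathlib

section
/- Let N be a positive integer, let ã, c ∈ ℝ^N, let ε, R ≥ 0, and let p, q ∈ [1, ∞] with conjugate exponents p*, q*. Then sup over a ∈ B_q(ã, ε) of sup over θ ∈ B_p(c, R) of |aᵀθ| is at most |ãᵀc| + ε‖c‖_{q*} + R‖ã‖_{p*} + C_{p,q} R ε, where C_{p,q} = N^{(1 − 1/p − 1/q)₊}. -/
/-!
Expand `aᵀθ = ãᵀc + ãᵀ(θ - c) + (a - ã)ᵀc + (a - ã)ᵀ(θ - c)`. Hölder's inequality bounds the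
two middle terms by `R‖ã‖_{p*}` and `ε‖c‖_{q*}`. For the last one, Hölder with the pair `(p*, p)`
is followed by the comparison `‖u‖_{p*} ≤ N^{(1/p* - 1/q)₊} ‖u‖_q` of ℓp-norms on `ℝ^N`, and
`1/p* = 1 - 1/p`. Both inequalities are instances of the `L^p` theory for the counting measure on
`Fin N`, except the monotonicity `‖v‖_r ≤ ‖v‖_s` for `s ≤ r`, which holds because every coordinate
of `v` is bounded by `‖v‖_s`.
-/

open scoped ENNReal
open Matrix

/-- The ℓp-norm on ℝ^N for `p ∈ [1, ∞]` (given as `p : ℝ≥0∞`). -/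
noncomputable def lpNorm {N : ℕ} (p : ℝ≥0∞) (v : Fin N → ℝ) : ℝ :=
  if p = ∞ then ⨆ i, |v i| else (∑ i, |v i| ^ p.toReal) ^ (1 / p.toReal)

open MeasureTheory hiding lpNorm

lemma ENNReal.toReal_one_div_le_of_le {r s : ℝ≥0∞} (hr : r ≠ 0) (hrs : r ≤ s) :
    (1 / s).toReal ≤ (1 / r).toReal :=
  ENNReal.toReal_mono (by simpa using hr) (ENNReal.div_le_div_left hrs 1)

section lpNorm

variable {N : ℕ} {p r s : ℝ≥0∞}

lemma lpNorm_nonneg (p : ℝ≥0∞) (v : Fin N → ℝ) : 0 ≤ lpNorm p v := by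
  unfold lpNorm
  split_ifs
  · exact Real.iSup_nonneg fun _ ↦ abs_nonneg _
  · positivity

lemma lpNorm_eq_toReal_eLpNorm (hp : p ≠ 0) (v : Fin N → ℝ) :
    lpNorm p v = (eLpNorm v p .count).toReal := by
  by_cases hpt : p = ∞
  · subst hpt
    rw [lpNorm, if_pos rfl, eLpNorm_exponent_top, eLpNormEssSup_count,
      ENNReal.toReal_iSup fun _ ↦ enorm_ne_top]
    simp
  · rw [lpNorm, if_neg hpt, eLpNorm_eq_lintegral_rpow_enorm_toReal hp hpt, lintegral_count,
      tsum_fintype, ← ENNReal.toReal_rpow, ENNReal.toReal_sum fun _ _ ↦ by finiteness]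
    simp_rw [← ENNReal.toReal_rpow, toReal_enorm, Real.norm_eq_abs]

lemma eLpNorm_count_ne_top (v : Fin N → ℝ) : eLpNorm v p .count ≠ ∞ :=
  (eLpNorm_count_lt_top_of_lt fun _ ↦ enorm_lt_top).ne

lemma abs_le_lpNorm (hp : p ≠ 0) (v : Fin N → ℝ) (i : Fin N) : |v i| ≤ lpNorm p v := by
  rw [lpNorm_eq_toReal_eLpNorm hp, ← Real.norm_eq_abs, ← toReal_enorm]
  exact ENNReal.toReal_mono (eLpNorm_count_ne_top v) (enorm_le_eLpNorm_count v i hp)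

lemma abs_dotProduct_le_lpNorm_mul_lpNorm (p q : ℝ≥0∞) [p.HolderConjugate q] (u v : Fin N → ℝ) :
    |u ⬝ᵥ v| ≤ lpNorm p u * lpNorm q v := by
  have holder :
      eLpNorm (fun i ↦ u i * v i) 1 .count ≤ 1 * eLpNorm u p .count * eLpNorm v q .count :=
    eLpNorm_le_eLpNorm_mul_eLpNorm'_of_norm (by fun_prop) (by fun_prop) (· * ·) 1
      (.of_forall fun _ ↦ by simp [norm_mul])
  rw [one_mul] at holder
  calc |u ⬝ᵥ v| ≤ ∑ i, |u i * v i| := Finset.abs_sum_le_sum_abs _ _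
    _ = lpNorm 1 (fun i ↦ u i * v i) := by simp [lpNorm]
    _ ≤ lpNorm p u * lpNorm q v := by
      rw [lpNorm_eq_toReal_eLpNorm one_ne_zero,
        lpNorm_eq_toReal_eLpNorm (ENNReal.HolderConjugate.ne_zero p q),
        lpNorm_eq_toReal_eLpNorm (ENNReal.HolderConjugate.ne_zero q p), ← ENNReal.toReal_mul]
      exact ENNReal.toReal_mono
        (ENNReal.mul_ne_top (eLpNorm_count_ne_top u) (eLpNorm_count_ne_top v)) holder

lemma lpNorm_le_lpNorm_of_le (hs : s ≠ 0) (hsr : s ≤ r) (v : Fin N → ℝ) :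
    lpNorm r v ≤ lpNorm s v := by
  set T := lpNorm s v with hTdef
  have hT : 0 ≤ T := lpNorm_nonneg s v
  have hvT : ∀ i, |v i| ≤ T := abs_le_lpNorm hs v
  by_cases hr : r = ∞
  · rw [hr, lpNorm, if_pos rfl]
    exact Real.iSup_le hvT hT
  have hs' : s ≠ ∞ := ne_top_of_le_ne_top hr hsr
  have hs0 : 0 < s.toReal := ENNReal.toReal_pos hs hs'
  have hsr_toReal : s.toReal ≤ r.toReal := ENNReal.toReal_mono hr hsr
  have hTs : ∑ i, |v i| ^ s.toReal = T ^ s.toReal := by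
    rw [hTdef, lpNorm, if_neg hs', one_div, Real.rpow_inv_rpow (by positivity) hs0.ne']
  have hsum : ∑ i, |v i| ^ r.toReal ≤ T ^ r.toReal := calc
    ∑ i, |v i| ^ r.toReal = ∑ i, |v i| ^ (r.toReal - s.toReal) * |v i| ^ s.toReal := by
      congr! 1 with i
      rw [← Real.rpow_add' (abs_nonneg _) (by linarith), sub_add_cancel]
    _ ≤ ∑ i, T ^ (r.toReal - s.toReal) * |v i| ^ s.toReal := by
      gcongr
      exact hvT _
    _ = T ^ r.toReal := by
      rw [← Finset.mul_sum, hTs, ← Real.rpow_add' hT (by linarith), sub_add_cancel]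
  calc lpNorm r v = (∑ i, |v i| ^ r.toReal) ^ r.toReal⁻¹ := by rw [lpNorm, if_neg hr, one_div]
    _ ≤ (T ^ r.toReal) ^ r.toReal⁻¹ := by gcongr
    _ = T := Real.rpow_rpow_inv hT (by linarith)

lemma lpNorm_le_rpow_mul_lpNorm_of_le (hr : r ≠ 0) (hrs : r ≤ s) (v : Fin N → ℝ) :
    lpNorm r v ≤ (N : ℝ) ^ ((1 / r).toReal - (1 / s).toReal) * lpNorm s v := by
  have key := eLpNorm_le_eLpNorm_mul_rpow_measure_univ (μ := .count) hrs (f := v) (by fun_prop)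
  rw [Measure.count_univ, ENat.card_eq_coe_fintype_card, Fintype.card_fin,
    ENat.toENNReal_coe] at key
  have hexp : 0 ≤ 1 / r.toReal - 1 / s.toReal := by
    simpa only [ENNReal.toReal_div, ENNReal.toReal_one, sub_nonneg]
      using ENNReal.toReal_one_div_le_of_le hr hrs
  rw [lpNorm_eq_toReal_eLpNorm hr,
    lpNorm_eq_toReal_eLpNorm ((pos_iff_ne_zero.2 hr).trans_le hrs).ne']
  simp only [ENNReal.toReal_div, ENNReal.toReal_one]
  refine (ENNReal.toReal_mono ?_ key).trans_eq ?_
  · exact ENNReal.mul_ne_top (eLpNorm_count_ne_top v)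
      (ENNReal.rpow_ne_top_of_nonneg hexp (ENNReal.natCast_ne_top N))
  · rw [ENNReal.toReal_mul, ← ENNReal.toReal_rpow, ENNReal.toReal_natCast, mul_comm]

lemma lpNorm_le_rpow_mul_lpNorm (hr : r ≠ 0) (hs : s ≠ 0) (v : Fin N → ℝ) :
    lpNorm r v ≤ (N : ℝ) ^ max ((1 / r).toReal - (1 / s).toReal) 0 * lpNorm s v := by
  rcases le_total r s with hrs | hsr
  · rw [max_eq_left (sub_nonneg.2 (ENNReal.toReal_one_div_le_of_le hr hrs))]
    exact lpNorm_le_rpow_mul_lpNorm_of_le hr hrs v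
  · rw [max_eq_right (sub_nonpos.2 (ENNReal.toReal_one_div_le_of_le hs hsr)), Real.rpow_zero,
      one_mul]
    exact lpNorm_le_lpNorm_of_le hs hsr v

lemma abs_dotProduct_le_rpow_mul_lpNorm_mul_lpNorm (p pstar q : ℝ≥0∞) [p.HolderConjugate pstar]
    (hq : q ≠ 0) (u v : Fin N → ℝ) :
    |u ⬝ᵥ v| ≤ (N : ℝ) ^ max (1 - (1 / p).toReal - (1 / q).toReal) 0
      * lpNorm q u * lpNorm p v := by
  have hpstar : (1 / pstar).toReal = 1 - (1 / p).toReal := by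
    rw [one_div, one_div, ← ENNReal.HolderConjugate.one_sub_inv p pstar,
      ENNReal.toReal_sub_of_le (ENNReal.inv_le_one.2 (ENNReal.HolderConjugate.one_le p pstar))
        ENNReal.one_ne_top, ENNReal.toReal_one]
  have hcompare := lpNorm_le_rpow_mul_lpNorm (ENNReal.HolderConjugate.ne_zero pstar p) hq u
  rw [hpstar] at hcompare
  calc |u ⬝ᵥ v| ≤ lpNorm pstar u * lpNorm p v := abs_dotProduct_le_lpNorm_mul_lpNorm pstar p u v
    _ ≤ _ := by gcongr; exact lpNorm_nonneg p v

end lpNorm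

lemma abs_dotProduct_le_of_lpNorm_sub_le {N : ℕ} {atil c a θ : Fin N → ℝ} {ε R : ℝ}
    {p pstar q qstar : ℝ≥0∞} [p.HolderConjugate pstar] [q.HolderConjugate qstar]
    (ha : lpNorm q (a - atil) ≤ ε) (hθ : lpNorm p (θ - c) ≤ R) :
    |a ⬝ᵥ θ| ≤ |atil ⬝ᵥ c| + ε * lpNorm qstar c + R * lpNorm pstar atil
      + (N : ℝ) ^ max (1 - (1 / p).toReal - (1 / q).toReal) 0 * R * ε := by
  set C := (N : ℝ) ^ max (1 - (1 / p).toReal - (1 / q).toReal) 0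
  have hε : 0 ≤ ε := (lpNorm_nonneg q _).trans ha
  have h₁ : |atil ⬝ᵥ (θ - c)| ≤ R * lpNorm pstar atil :=
    (abs_dotProduct_le_lpNorm_mul_lpNorm pstar p atil (θ - c)).trans
      (by rw [mul_comm]; gcongr; exact lpNorm_nonneg pstar atil)
  have h₂ : |(a - atil) ⬝ᵥ c| ≤ ε * lpNorm qstar c :=
    (abs_dotProduct_le_lpNorm_mul_lpNorm q qstar (a - atil) c).trans
      (by gcongr; exact lpNorm_nonneg qstar c)
  have h₃ : |(a - atil) ⬝ᵥ (θ - c)| ≤ C * R * ε := by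
    refine (abs_dotProduct_le_rpow_mul_lpNorm_mul_lpNorm p pstar q
      (ENNReal.HolderConjugate.ne_zero q qstar) (a - atil) (θ - c)).trans ?_
    rw [mul_right_comm C R]
    gcongr
    exact lpNorm_nonneg p _
  calc |a ⬝ᵥ θ|
      = |atil ⬝ᵥ c + atil ⬝ᵥ (θ - c) + (a - atil) ⬝ᵥ c + (a - atil) ⬝ᵥ (θ - c)| := by
        simp only [sub_dotProduct, dotProduct_sub]; ring_nf
    _ ≤ |atil ⬝ᵥ c| + |atil ⬝ᵥ (θ - c)| + |(a - atil) ⬝ᵥ c| + |(a - atil) ⬝ᵥ (θ - c)| :=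
        (abs_add_le _ _).trans (by gcongr; exact abs_add_three _ _ _)
    _ ≤ _ := by linarith

theorem stable_sphere_test_bound_general (N : ℕ) (atil c : Fin N → ℝ)
    (ε R : ℝ) (hε : 0 ≤ ε) (hR : 0 ≤ R) (p pstar q qstar : ℝ≥0∞)
    (hpconj : 1 / p + 1 / pstar = 1) (hqconj : 1 / q + 1 / qstar = 1) :
    sSup {x : ℝ | ∃ a : Fin N → ℝ, lpNorm q (a - atil) ≤ ε ∧
        x = sSup {t : ℝ | ∃ θ : Fin N → ℝ, lpNorm p (θ - c) ≤ R ∧ t = |a ⬝ᵥ θ|}}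
      ≤ |atil ⬝ᵥ c| + ε * lpNorm qstar c + R * lpNorm pstar atil
        + (N : ℝ) ^ max (1 - (1 / p).toReal - (1 / q).toReal) 0 * R * ε := by
  have : p.HolderConjugate pstar := ⟨by simpa using hpconj⟩
  have : q.HolderConjugate qstar := ⟨by simpa using hqconj⟩
  have hbound_nonneg : 0 ≤ |atil ⬝ᵥ c| + ε * lpNorm qstar c + R * lpNorm pstar atil
      + (N : ℝ) ^ max (1 - (1 / p).toReal - (1 / q).toReal) 0 * R * ε := by
    have := lpNorm_nonneg qstar c
    have := lpNorm_nonneg pstar atil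
    positivity
  refine Real.sSup_le ?_ hbound_nonneg
  rintro _ ⟨a, ha, rfl⟩
  refine Real.sSup_le ?_ hbound_nonneg
  rintro _ ⟨θ, hθ, rfl⟩
  exact abs_dotProduct_le_of_lpNorm_sub_le ha hθ

/-- Stable sphere test bound: the sup over `a ∈ B_q(ã, ε)` of the sup over
`θ ∈ B_p(c, R)` of `|aᵀθ|` is at most
`|ãᵀc| + ε‖c‖_{q*} + R‖ã‖_{p*} + C_{p,q} R ε` with
`C_{p,q} = N^{(1 − 1/p − 1/q)₊}`. -/
theorem stable_sphere_test_bound (N : ℕ) (hN : 0 < N) (atil c : Fin N → ℝ)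
    (ε R : ℝ) (hε : 0 ≤ ε) (hR : 0 ≤ R) (p pstar q qstar : ℝ≥0∞)
    (hp : 1 ≤ p) (hq : 1 ≤ q)
    (hpconj : 1 / p + 1 / pstar = 1) (hqconj : 1 / q + 1 / qstar = 1) :
    sSup {x : ℝ | ∃ a : Fin N → ℝ, lpNorm q (a - atil) ≤ ε ∧
        x = sSup {t : ℝ | ∃ θ : Fin N → ℝ, lpNorm p (θ - c) ≤ R ∧ t = |a ⬝ᵥ θ|}}
      ≤ |atil ⬝ᵥ c| + ε * lpNorm qstar c + R * lpNorm pstar atil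
        + (N : ℝ) ^ max (1 - (1 / p).toReal - (1 / q).toReal) 0 * R * ε :=
  stable_sphere_test_bound_general N atil c ε R hε hR p pstar q qstar hpconj hqconj
end

section
/- Let A ∈ ℝ^{N×K}, y ∈ ℝ^N, λ > 0, and let x* ∈ ℝ^K minimize the Lasso primal objective P(x|A) = ½‖Ax − y‖₂² + λ‖x‖₁ over ℝ^K. Define θ* = (y − Ax*)/λ. Then θ* ∈ Δ_A, D(θ*) = P(x*|A), and D(θ) ≤ D(θ*) for every θ ∈ Δ_A; i.e., θ* maximizes the dual objective over the dual feasible set (strong duality for the Lasso). -/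
open scoped ENNReal
open Matrix

/-- The Lasso primal objective `P(x|A) = ½‖Ax − y‖₂² + λ‖x‖₁`. -/
noncomputable def lassoPrimal {N K : ℕ} (A : Matrix (Fin N) (Fin K) ℝ)
    (y : Fin N → ℝ) (lam : ℝ) (x : Fin K → ℝ) : ℝ :=
  (1 / 2) * (lpNorm 2 (A *ᵥ x - y)) ^ 2 + lam * lpNorm 1 x

/-- The Lasso dual objective `D(θ) = ½‖y‖₂² − (λ²/2)‖θ − y/λ‖₂²`. -/
noncomputable def lassoDual {N : ℕ} (y : Fin N → ℝ) (lam : ℝ)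
    (θ : Fin N → ℝ) : ℝ :=
  (1 / 2) * (lpNorm 2 y) ^ 2 - (lam ^ 2 / 2) * (lpNorm 2 (θ - lam⁻¹ • y)) ^ 2

/-! The duality gap splits as `P(x) − D(θ) = ½‖Ax − y + λθ‖₂² + λ(‖x‖₁ − ⟨Aᵀθ, x⟩)`, and the
second term is nonnegative for dual feasible `θ` by Hölder's inequality: weak duality.
Perturbing the minimizer `x*` to `x* + t d` and letting `t → 0⁺` gives
`⟨Aᵀ(y − Ax*), d⟩ ≤ λ‖d‖₁` for every `d`, i.e. `θ*` is dual feasible, and along `d = ±x*` gives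
`⟨Aᵀ(y − Ax*), x*⟩ = λ‖x*‖₁`. Both terms of the gap therefore vanish at `(x*, θ*)`. -/

open Finset Filter Set Topology

section LpNorm

variable {N : ℕ}

lemma lpNorm_two_sq (v : Fin N → ℝ) : lpNorm 2 v ^ 2 = v ⬝ᵥ v := by
  have hnn : (0:ℝ) ≤ ∑ i, |v i| ^ (2:ℝ) := by positivity
  rw [lpNorm, if_neg ENNReal.ofNat_ne_top, ENNReal.toReal_ofNat, ← Real.rpow_natCast,
    ← Real.rpow_mul hnn]
  simp [dotProduct, ← sq]

lemma lpNorm_one_eq_sum_abs (v : Fin N → ℝ) : lpNorm 1 v = ∑ i, |v i| := by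
  simp [lpNorm]

lemma lpNorm_one_nonneg (v : Fin N → ℝ) : 0 ≤ lpNorm 1 v := by
  rw [lpNorm_one_eq_sum_abs]; positivity

lemma lpNorm_top_eq_iSup (v : Fin N → ℝ) : lpNorm ∞ v = ⨆ i, |v i| := if_pos rfl

lemma lpNorm_top_le {v : Fin N → ℝ} {c : ℝ} (h : ∀ i, |v i| ≤ c) (hc : 0 ≤ c) :
    lpNorm ∞ v ≤ c :=
  (lpNorm_top_eq_iSup v).trans_le (Real.iSup_le h hc)

lemma abs_le_lpNorm_top (v : Fin N → ℝ) (i : Fin N) : |v i| ≤ lpNorm ∞ v := by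
  rw [lpNorm_top_eq_iSup]
  exact le_ciSup (f := fun i => |v i|) (Finite.bddAbove_range _) i

lemma lpNorm_one_add_le (v w : Fin N → ℝ) :
    lpNorm 1 (v + w) ≤ lpNorm 1 v + lpNorm 1 w := by
  simp only [lpNorm_one_eq_sum_abs, Pi.add_apply, ← sum_add_distrib]
  exact sum_le_sum fun i _ => abs_add_le _ _

lemma lpNorm_one_smul (c : ℝ) (v : Fin N → ℝ) : lpNorm 1 (c • v) = |c| * lpNorm 1 v := by
  simp [lpNorm_one_eq_sum_abs, abs_mul, mul_sum]

lemma lpNorm_one_single (j : Fin N) (c : ℝ) : lpNorm 1 (Pi.single j c) = |c| := by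
  simp [lpNorm_one_eq_sum_abs, Pi.single_apply, apply_ite]

lemma dotProduct_le_lpNorm_top_mul_lpNorm_one (w x : Fin N → ℝ) :
    w ⬝ᵥ x ≤ lpNorm ∞ w * lpNorm 1 x := by
  rw [lpNorm_one_eq_sum_abs, mul_sum]
  refine sum_le_sum fun i _ => ?_
  calc w i * x i ≤ |w i| * |x i| := by rw [← abs_mul]; exact le_abs_self _
    _ ≤ lpNorm ∞ w * |x i| := by gcongr; exact abs_le_lpNorm_top w i

end LpNorm

lemma le_of_forall_mem_Ioc_le_add_mul {a b c : ℝ} (h : ∀ t ∈ Ioc (0:ℝ) 1, a ≤ b + t * c) :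
    a ≤ b := by
  have hlim : Tendsto (fun t : ℝ => b + t * c) (𝓝[>] 0) (𝓝 b) := by
    have : Continuous (fun t : ℝ => b + t * c) := by fun_prop
    simpa using (this.tendsto 0).mono_left nhdsWithin_le_nhds
  exact ge_of_tendsto hlim (eventually_of_mem (Ioc_mem_nhdsGT one_pos) h)

section Lasso

variable {N K : ℕ} (A : Matrix (Fin N) (Fin K) ℝ) (y : Fin N → ℝ) (lam : ℝ)

lemma lassoPrimal_add_smul (x d : Fin K → ℝ) (t : ℝ) :
    lassoPrimal A y lam (x + t • d) = lassoPrimal A y lam x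
      - t * ((Aᵀ *ᵥ (y - A *ᵥ x)) ⬝ᵥ d) + t ^ 2 / 2 * ((A *ᵥ d) ⬝ᵥ (A *ᵥ d))
      + lam * (lpNorm 1 (x + t • d) - lpNorm 1 x) := by
  simp only [lassoPrimal, lpNorm_two_sq, mulVec_add, mulVec_smul, mulVec_transpose,
    ← dotProduct_mulVec]
  simp only [add_dotProduct, dotProduct_add, sub_dotProduct, dotProduct_sub, smul_dotProduct,
    dotProduct_smul, smul_eq_mul, dotProduct_comm (A *ᵥ d)]
  ring

lemma lassoPrimal_sub_lassoDual (hlam : lam ≠ 0) (x : Fin K → ℝ) (θ : Fin N → ℝ) :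
    lassoPrimal A y lam x - lassoDual y lam θ
      = 1 / 2 * lpNorm 2 (A *ᵥ x - y + lam • θ) ^ 2
        + lam * (lpNorm 1 x - (Aᵀ *ᵥ θ) ⬝ᵥ x) := by
  simp only [lassoPrimal, lassoDual, lpNorm_two_sq, mulVec_transpose, ← dotProduct_mulVec]
  simp only [add_dotProduct, dotProduct_add, sub_dotProduct, dotProduct_sub, smul_dotProduct,
    dotProduct_smul, smul_eq_mul, dotProduct_comm (A *ᵥ x), dotProduct_comm y θ]
  field_simp
  ring

theorem lassoDual_le_lassoPrimal (hlam : 0 < lam) {θ : Fin N → ℝ}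
    (hθ : lpNorm ∞ (Aᵀ *ᵥ θ) ≤ 1) (x : Fin K → ℝ) :
    lassoDual y lam θ ≤ lassoPrimal A y lam x := by
  have hdot : (Aᵀ *ᵥ θ) ⬝ᵥ x ≤ lpNorm 1 x :=
    calc _ ≤ lpNorm ∞ (Aᵀ *ᵥ θ) * lpNorm 1 x := dotProduct_le_lpNorm_top_mul_lpNorm_one _ _
      _ ≤ lpNorm 1 x := mul_le_of_le_one_left (lpNorm_one_nonneg x) hθ
  have hgap := lassoPrimal_sub_lassoDual A y lam hlam.ne' x θ
  nlinarith [sq_nonneg (lpNorm 2 (A *ᵥ x - y + lam • θ))]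

variable {A y lam} {x : Fin K → ℝ}

lemma transpose_mulVec_residual_dotProduct_le (hlam : 0 ≤ lam)
    (hmin : ∀ x', lassoPrimal A y lam x ≤ lassoPrimal A y lam x') (d : Fin K → ℝ) {δ : ℝ}
    (hδ : ∀ t ∈ Ioc (0 : ℝ) 1, lpNorm 1 (x + t • d) ≤ lpNorm 1 x + t * δ) :
    (Aᵀ *ᵥ (y - A *ᵥ x)) ⬝ᵥ d ≤ lam * δ := by
  refine le_of_forall_mem_Ioc_le_add_mul (c := (A *ᵥ d) ⬝ᵥ (A *ᵥ d) / 2) fun t ht => ?_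
  have hopt := hmin (x + t • d)
  rw [lassoPrimal_add_smul] at hopt
  have hℓ1 := mul_le_mul_of_nonneg_left (hδ t ht) hlam
  refine le_of_mul_le_mul_left ?_ ht.1
  nlinarith

lemma transpose_mulVec_residual_dotProduct_le_lpNorm_one (hlam : 0 ≤ lam)
    (hmin : ∀ x', lassoPrimal A y lam x ≤ lassoPrimal A y lam x') (d : Fin K → ℝ) :
    (Aᵀ *ᵥ (y - A *ᵥ x)) ⬝ᵥ d ≤ lam * lpNorm 1 d :=
  transpose_mulVec_residual_dotProduct_le hlam hmin d fun t ht => by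
    simpa [lpNorm_one_smul, abs_of_pos ht.1] using lpNorm_one_add_le x (t • d)

lemma transpose_mulVec_residual_dotProduct_self (hlam : 0 ≤ lam)
    (hmin : ∀ x', lassoPrimal A y lam x ≤ lassoPrimal A y lam x') :
    (Aᵀ *ᵥ (y - A *ᵥ x)) ⬝ᵥ x = lam * lpNorm 1 x := by
  refine le_antisymm (transpose_mulVec_residual_dotProduct_le_lpNorm_one hlam hmin x) ?_
  have h := transpose_mulVec_residual_dotProduct_le hlam hmin (-x) (δ := -lpNorm 1 x)
    fun t ht => by
      have hx : x + t • -x = (1 - t) • x := by module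
      rw [hx, lpNorm_one_smul, abs_of_nonneg (sub_nonneg.2 ht.2)]
      linarith
  rw [dotProduct_neg] at h
  linarith

lemma lpNorm_top_transpose_mulVec_residual_le (hlam : 0 < lam)
    (hmin : ∀ x', lassoPrimal A y lam x ≤ lassoPrimal A y lam x') :
    lpNorm ∞ (Aᵀ *ᵥ (lam⁻¹ • (y - A *ᵥ x))) ≤ 1 := by
  refine lpNorm_top_le (fun j => ?_) zero_le_one
  set g := Aᵀ *ᵥ (y - A *ᵥ x)
  have h := transpose_mulVec_residual_dotProduct_le_lpNorm_one hlam.le hmin (Pi.single j (g j))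
  rw [dotProduct_single, lpNorm_one_single] at h
  rw [mulVec_smul, Pi.smul_apply, smul_eq_mul, abs_mul, abs_inv, abs_of_pos hlam,
    inv_mul_le_iff₀ hlam, mul_one]
  nlinarith [abs_mul_abs_self (g j), abs_nonneg (g j)]

end Lasso

/-- Strong duality for the Lasso: if `x*` minimizes the primal objective and
`θ* = (y − Ax*)/λ`, then `θ*` is dual feasible, `D(θ*) = P(x*|A)`, and `θ*`
maximizes the dual objective over the dual feasible set `Δ_A`. -/
theorem lasso_strong_duality (N K : ℕ) (A : Matrix (Fin N) (Fin K) ℝ)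
    (y : Fin N → ℝ) (lam : ℝ) (hlam : 0 < lam) (xstar : Fin K → ℝ)
    (hmin : ∀ x : Fin K → ℝ, lassoPrimal A y lam xstar ≤ lassoPrimal A y lam x) :
    lpNorm ∞ (Aᵀ *ᵥ (lam⁻¹ • (y - A *ᵥ xstar))) ≤ 1 ∧
    lassoDual y lam (lam⁻¹ • (y - A *ᵥ xstar)) = lassoPrimal A y lam xstar ∧
    ∀ θ : Fin N → ℝ, lpNorm ∞ (Aᵀ *ᵥ θ) ≤ 1 →
      lassoDual y lam θ ≤ lassoDual y lam (lam⁻¹ • (y - A *ᵥ xstar)) := by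
  set θstar := lam⁻¹ • (y - A *ᵥ xstar)
  have hresidual : A *ᵥ xstar - y + lam • θstar = 0 := by
    simp [θstar, smul_smul, hlam.ne']
  have hcomplementary : (Aᵀ *ᵥ θstar) ⬝ᵥ xstar = lpNorm 1 xstar := by
    rw [mulVec_smul, smul_dotProduct, transpose_mulVec_residual_dotProduct_self hlam.le hmin,
      smul_eq_mul, inv_mul_cancel_left₀ hlam.ne']
  have hgap := lassoPrimal_sub_lassoDual A y lam hlam.ne' xstar θstar
  rw [hresidual, hcomplementary, lpNorm_two_sq, dotProduct_zero] at hgap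
  have hzero_gap : lassoDual y lam θstar = lassoPrimal A y lam xstar := by linarith
  exact ⟨lpNorm_top_transpose_mulVec_residual_le hlam hmin, hzero_gap,
    fun θ hθ => hzero_gap ▸ lassoDual_le_lassoPrimal A y lam hlam hθ xstar⟩
end

section
/- (Dual scaling optimality.) Let A ∈ ℝ^{N×K}, y ∈ ℝ^N, λ > 0, and let z ∈ ℝ^N be nonzero. Let v = ((yᵀz)/(λ‖z‖₂²)) z (the Euclidean projection of y/λ onto the line spanned by z), and let Θ(v|A) = v / max(1, ‖Aᵀv‖_∞). Then Θ(v|A) minimizes ‖z′ − y/λ‖₂ over all z′ of the form z′ = αz (α ∈ ℝ) satisfying ‖Aᵀz′‖_∞ ≤ 1; in particular Θ(v|A) itself satisfies ‖AᵀΘ(v|A)‖_∞ ≤ 1. -/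
open scoped ENNReal
open Matrix

lemma lp2_eq_sqrt {n : ℕ} (w : Fin n → ℝ) :
    lpNorm 2 w = Real.sqrt (∑ i, w i ^ 2) := by
  have h2 : ((2 : ℝ≥0∞) : ℝ≥0∞) ≠ ∞ := by norm_num
  simp only [lpNorm, if_neg h2, ENNReal.toReal_ofNat]
  have hs : ∀ i : Fin n, |w i| ^ (2 : ℝ) = w i ^ 2 := by
    intro i
    rw [show (2:ℝ) = ((2:ℕ):ℝ) by norm_num, Real.rpow_natCast, sq_abs]
  rw [Finset.sum_congr rfl (fun i _ => hs i),
    Real.sqrt_eq_rpow]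

lemma lp2_sq {n : ℕ} (w : Fin n → ℝ) : lpNorm 2 w ^ 2 = ∑ i, w i ^ 2 := by
  rw [lp2_eq_sqrt, Real.sq_sqrt (Finset.sum_nonneg fun i _ => sq_nonneg _)]

lemma lpinf_nonneg {n : ℕ} (w : Fin n → ℝ) : 0 ≤ lpNorm ∞ w := by
  simp only [lpNorm, if_pos rfl]
  exact Real.iSup_nonneg fun i => abs_nonneg _

lemma lpinf_smul {n : ℕ} (t : ℝ) (w : Fin n → ℝ) :
    lpNorm ∞ (t • w) = |t| * lpNorm ∞ w := by
  simp only [lpNorm, if_pos rfl, Pi.smul_apply, smul_eq_mul, abs_mul]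
  exact (Real.mul_iSup_of_nonneg (abs_nonneg t) _).symm

/-- Dual scaling optimality: with `v = ((yᵀz)/(λ‖z‖₂²)) z` the projection of
`y/λ` onto the line spanned by `z`, and `Θ(v|A) = v / max(1, ‖Aᵀv‖_∞)`,
the point `Θ(v|A)` is dual feasible and minimizes `‖z′ − y/λ‖₂` over all dual
feasible points `z′ = αz` proportional to `z`. -/
theorem dual_scaling_optimality (N K : ℕ) (A : Matrix (Fin N) (Fin K) ℝ)
    (y : Fin N → ℝ) (lam : ℝ) (hlam : 0 < lam) (z : Fin N → ℝ) (hz : z ≠ 0)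
    (v : Fin N → ℝ) (hv : v = ((y ⬝ᵥ z) / (lam * (lpNorm 2 z) ^ 2)) • z)
    (Θv : Fin N → ℝ) (hΘv : Θv = (max 1 (lpNorm ∞ (Aᵀ *ᵥ v)))⁻¹ • v) :
    lpNorm ∞ (Aᵀ *ᵥ Θv) ≤ 1 ∧
    ∀ α : ℝ, lpNorm ∞ (Aᵀ *ᵥ (α • z)) ≤ 1 →
      lpNorm 2 (Θv - lam⁻¹ • y) ≤ lpNorm 2 (α • z - lam⁻¹ • y) := by
  set c : ℝ := (y ⬝ᵥ z) / (lam * (lpNorm 2 z) ^ 2) with hc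
  set m : ℝ := max 1 (lpNorm ∞ (Aᵀ *ᵥ v)) with hmdef
  have hm1 : (1:ℝ) ≤ m := le_max_left _ _
  have hm0 : (0:ℝ) < m := lt_of_lt_of_le one_pos hm1
  have hvle : lpNorm ∞ (Aᵀ *ᵥ v) ≤ m := le_max_right _ _
  have hfeas : lpNorm ∞ (Aᵀ *ᵥ Θv) ≤ 1 := by
    rw [hΘv, Matrix.mulVec_smul, lpinf_smul, abs_of_pos (inv_pos.mpr hm0)]
    calc m⁻¹ * lpNorm ∞ (Aᵀ *ᵥ v) ≤ m⁻¹ * m := by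
          exact mul_le_mul_of_nonneg_left hvle (inv_nonneg.mpr hm0.le)
      _ = 1 := inv_mul_cancel₀ hm0.ne'
  refine ⟨hfeas, fun α hα => ?_⟩
  -- setup
  set Z : ℝ := ∑ i, z i ^ 2 with hZdef
  have hZ : 0 < Z := by
    obtain ⟨i, hi⟩ := Function.ne_iff.mp hz
    have hi' : z i ≠ 0 := by simpa using hi
    exact Finset.sum_pos' (fun j _ => sq_nonneg _)
      ⟨i, Finset.mem_univ i, sq_abs (z i) ▸ pow_pos (abs_pos.mpr hi') 2⟩
  have hlpz : lpNorm 2 z ^ 2 = Z := lp2_sq z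
  set s : ℝ := lpNorm ∞ (Aᵀ *ᵥ z) with hsdef
  have hs0 : 0 ≤ s := lpinf_nonneg _
  have hvinf : lpNorm ∞ (Aᵀ *ᵥ v) = |c| * s := by
    rw [hv, Matrix.mulVec_smul, lpinf_smul]
  have hαs : |α| * s ≤ 1 := by
    rw [← lpinf_smul, ← Matrix.mulVec_smul]; exact hα
  have hm : m = max 1 (|c| * s) := by rw [hmdef, hvinf]
  -- Θv = (m⁻¹ * c) • z
  have hΘz : Θv = (m⁻¹ * c) • z := by rw [hΘv, hv, smul_smul]
  set β : ℝ := m⁻¹ * c with hβ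
  -- key quadratic inequality
  have hkey : (β - c) ^ 2 ≤ (α - c) ^ 2 := by
    rcases le_or_gt (|c| * s) 1 with h | h
    · have : m = 1 := by rw [hm, max_eq_left h]
      rw [hβ, this]; simp; positivity
    · have hmeq : m = |c| * s := by rw [hm, max_eq_right h.le]
      have hs' : 0 < s := by
        rcases hs0.lt_or_eq with h' | h'
        · exact h'
        · exfalso; rw [← h'] at h; simp at h; linarith
      have hC : 0 < |c| := by
        by_contra h'
        push_neg at h'
        have : |c| = 0 := le_antisymm h' (abs_nonneg c)
        rw [this] at h; simp at h; linarith
      have hαle : |α| ≤ 1 / s := (le_div_iff₀ hs').mpr hαs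
      have hsC : 1 / s ≤ |c| := (div_le_iff₀ hs').mpr (by linarith)
      have h1 : (|α| - |c|) ^ 2 ≤ (α - c) ^ 2 := by
        have hac : α * c ≤ |α| * |c| := by
          calc α * c ≤ |α * c| := le_abs_self _
            _ = |α| * |c| := abs_mul _ _
        nlinarith [sq_abs α, sq_abs c]
      have h2 : (1 / s - |c|) ^ 2 ≤ (|α| - |c|) ^ 2 := by
        nlinarith [mul_nonneg (sub_nonneg.mpr hαle) (by linarith : (0:ℝ) ≤ 2 * |c| - |α| - 1/s)]
      have h3 : (β - c) ^ 2 = (1 / s - |c|) ^ 2 := by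
        have e1 : β - c = c * ((|c| * s)⁻¹ - 1) := by rw [hβ, hmeq]; ring
        have e3 : |c| * ((|c| * s)⁻¹ - 1) = 1 / s - |c| := by
          rw [mul_sub, mul_inv, ← mul_assoc, mul_inv_cancel₀ hC.ne', one_mul,
            mul_one, one_div]
        rw [e1, mul_pow, ← sq_abs c, ← mul_pow, e3]
      linarith [h3, h2, h1]
  -- expand the sums
  set u : Fin N → ℝ := lam⁻¹ • y with hu
  have expand : ∀ γ : ℝ, (∑ i, ((γ • z - u) i) ^ 2)
      = γ ^ 2 * Z - 2 * γ * (∑ i, z i * u i) + ∑ i, u i ^ 2 := by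
    intro γ
    simp only [Pi.sub_apply, Pi.smul_apply, smul_eq_mul]
    rw [hZdef, Finset.mul_sum, Finset.mul_sum, ← Finset.sum_sub_distrib,
      ← Finset.sum_add_distrib]
    exact Finset.sum_congr rfl fun i _ => by ring
  have hD : (∑ i, z i * u i) = c * Z := by
    have hyz : y ⬝ᵥ z = c * (lam * Z) := by
      rw [hc, hlpz]
      field_simp
    simp only [hu, Pi.smul_apply, smul_eq_mul]
    have : ∑ i, z i * (lam⁻¹ * y i) = lam⁻¹ * (y ⬝ᵥ z) := by
      rw [dotProduct, Finset.mul_sum]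
      exact Finset.sum_congr rfl fun i _ => by ring
    rw [this, hyz]
    field_simp
  -- conclude
  rw [hΘz]
  rw [lp2_eq_sqrt, lp2_eq_sqrt]
  apply Real.sqrt_le_sqrt
  rw [expand β, expand α, hD]
  nlinarith [mul_le_mul_of_nonneg_left hkey hZ.le]
end

section
/- (Static Safe sphere.) Let A ∈ ℝ^{N×K}, y ∈ ℝ^N, and let 0 < λ ≤ λ_max := ‖Aᵀy‖_∞ with λ_max > 0. Let x* ∈ ℝ^K minimize the Lasso primal objective P(x|A) = ½‖Ax − y‖₂² + λ‖x‖₁ over ℝ^K, and set θ* = (y − Ax*)/λ. Then ‖θ* − y/λ‖₂ ≤ |1/λ_max − 1/λ| · ‖y‖₂. -/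
open scoped ENNReal
open Matrix

lemma lpNorm_two {N : ℕ} (v : Fin N → ℝ) :
    lpNorm 2 v = Real.sqrt (∑ i, v i ^ 2) := by
  have h2 : ((2:ℝ≥0∞)).toReal = 2 := by simp
  simp only [lpNorm, if_neg (by norm_num : (2:ℝ≥0∞) ≠ ∞), h2]
  rw [Real.sqrt_eq_rpow]
  congr 1
  apply Finset.sum_congr rfl
  intro i _
  rw [show ((2:ℝ)) = ((2:ℕ):ℝ) by norm_num, Real.rpow_natCast]
  simp [sq_abs]

lemma lpNorm_one {N : ℕ} (v : Fin N → ℝ) :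
    lpNorm 1 v = ∑ i, |v i| := by
  simp [lpNorm]

lemma le_lpNorm_inf {N : ℕ} (v : Fin N → ℝ) (i : Fin N) :
    |v i| ≤ lpNorm ∞ v := by
  simp only [lpNorm, if_pos rfl]
  exact le_ciSup (f := fun i => |v i|) (Set.Finite.bddAbove (Set.finite_range _)) i

lemma sq_lpNorm_two {N : ℕ} (v : Fin N → ℝ) :
    (lpNorm 2 v) ^ 2 = ∑ i, v i ^ 2 := by
  rw [lpNorm_two, Real.sq_sqrt (Finset.sum_nonneg fun i _ => sq_nonneg _)]

lemma primal_eval {N K : ℕ} (A : Matrix (Fin N) (Fin K) ℝ)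
    (y : Fin N → ℝ) (lam : ℝ) (x : Fin K → ℝ) :
    lassoPrimal A y lam x
      = (1/2) * (∑ i, ((A *ᵥ x) i - y i) ^ 2) + lam * ∑ j, |x j| := by
  rw [lassoPrimal, sq_lpNorm_two, lpNorm_one]
  rfl

/-- Static Safe sphere: with `λ_max = ‖Aᵀy‖_∞ > 0` and `0 < λ ≤ λ_max`, the
dual optimal point `θ* = (y − Ax*)/λ` satisfies
`‖θ* − y/λ‖₂ ≤ |1/λ_max − 1/λ| ‖y‖₂`. -/
theorem static_safe_sphere (N K : ℕ) (A : Matrix (Fin N) (Fin K) ℝ)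
    (y : Fin N → ℝ) (lam : ℝ) (hlam : 0 < lam)
    (hlmaxpos : 0 < lpNorm ∞ (Aᵀ *ᵥ y)) (hle : lam ≤ lpNorm ∞ (Aᵀ *ᵥ y))
    (xstar : Fin K → ℝ)
    (hmin : ∀ x : Fin K → ℝ, lassoPrimal A y lam xstar ≤ lassoPrimal A y lam x) :
    lpNorm 2 (lam⁻¹ • (y - A *ᵥ xstar) - lam⁻¹ • y)
      ≤ |(lpNorm ∞ (Aᵀ *ᵥ y))⁻¹ - lam⁻¹| * lpNorm 2 y := by
  set μ := lpNorm ∞ (Aᵀ *ᵥ y) with hμdef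
  set w := A *ᵥ xstar with hwdef
  set a := ∑ i, w i ^ 2 with hadef
  set b := ∑ i, w i * y i with hbdef
  set c := ∑ i, y i ^ 2 with hcdef
  set s := ∑ j, |xstar j| with hsdef
  have ha0 : 0 ≤ a := Finset.sum_nonneg fun i _ => sq_nonneg _
  have hc0 : 0 ≤ c := Finset.sum_nonneg fun i _ => sq_nonneg _
  -- b = ⟨x*, Aᵀy⟩
  have hbu : b = ∑ j, xstar j * (Aᵀ *ᵥ y) j := by
    simp only [hbdef, hwdef, mulVec, dotProduct, transpose_apply, Finset.sum_mul,
      Finset.mul_sum]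
    rw [Finset.sum_comm]
    congr 1; ext i; congr 1; ext j; ring
  -- b ≤ μ s
  have hbs : b ≤ μ * s := by
    rw [hbu, hsdef, Finset.mul_sum]
    apply Finset.sum_le_sum
    intro j _
    calc xstar j * (Aᵀ *ᵥ y) j ≤ |xstar j * (Aᵀ *ᵥ y) j| := le_abs_self _
      _ = |xstar j| * |(Aᵀ *ᵥ y) j| := abs_mul _ _
      _ ≤ |xstar j| * μ := by
          exact mul_le_mul_of_nonneg_left (le_lpNorm_inf _ j) (abs_nonneg _)
      _ = μ * |xstar j| := mul_comm _ _
  -- scaling gives quadratic inequality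
  have key : ∀ t : ℝ, 0 ≤ t →
      (1/2) * (a - 2*b + c) + lam * s
        ≤ (1/2) * (t^2*a - 2*t*b + c) + lam * (t*s) := by
    intro t ht
    have h := hmin (t • xstar)
    rw [primal_eval, primal_eval, mulVec_smul, ← hwdef] at h
    have e1 : ∑ i, ((t • w) i - y i)^2 = t^2*a - 2*t*b + c := by
      have hcong : ∀ i ∈ Finset.univ, ((t • w) i - y i)^2
          = t^2 * w i^2 - 2*t*(w i*y i) + y i^2 := by
        intro i _; simp only [Pi.smul_apply, smul_eq_mul]; ring
      rw [Finset.sum_congr rfl hcong, Finset.sum_add_distrib, Finset.sum_sub_distrib,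
        ← Finset.mul_sum, ← Finset.mul_sum, ← hadef, ← hbdef, ← hcdef]
    have e2 : ∑ i, (w i - y i)^2 = a - 2*b + c := by
      have hcong : ∀ i ∈ Finset.univ, (w i - y i)^2
          = w i^2 - 2*(w i*y i) + y i^2 := by intro i _; ring
      rw [Finset.sum_congr rfl hcong, Finset.sum_add_distrib, Finset.sum_sub_distrib,
        ← Finset.mul_sum, ← hadef, ← hbdef, ← hcdef]
    have e3 : ∑ j, |(t • xstar) j| = t * s := by
      simp only [Pi.smul_apply, smul_eq_mul, abs_mul, abs_of_nonneg ht]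
      rw [← Finset.mul_sum, ← hsdef]
    rw [e1, e2, e3] at h
    linarith
  -- stationarity: d := a - b + lam*s = 0
  have hd0 : ∀ ε : ℝ, 0 < ε → ε ≤ 1 → |a - b + lam*s| ≤ a*ε/2 := by
    intro ε hε hε1
    have hp := key (1+ε) (by linarith)
    have hm := key (1-ε) (by linarith)
    rw [abs_le]
    constructor
    · nlinarith [hp]
    · nlinarith [hm]
  have hd : a - b + lam*s = 0 := by
    by_contra h
    have hdpos : 0 < |a - b + lam*s| := abs_pos.mpr h
    rcases eq_or_lt_of_le ha0 with h0 | h0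
    · have h1 := hd0 1 one_pos le_rfl
      rw [← h0] at h1
      simp at h1
      exact h (by linarith)
    · have hε : 0 < min 1 (|a - b + lam*s|/a) := lt_min one_pos (div_pos hdpos h0)
      have hh := hd0 _ hε (min_le_left _ _)
      have h2 : a * min 1 (|a - b + lam*s|/a) ≤ |a - b + lam*s| := by
        calc a * min 1 (|a - b + lam*s|/a) ≤ a * (|a - b + lam*s|/a) :=
              mul_le_mul_of_nonneg_left (min_le_right _ _) ha0
          _ = |a - b + lam*s| := by field_simp
      linarith
  -- weak duality inequality: sum of squares nonneg
  have hμ : 0 < μ := hlmaxpos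
  have hsq : 0 ≤ ∑ i, (μ * w i - (μ - lam) * y i)^2 :=
    Finset.sum_nonneg fun i _ => sq_nonneg _
  have hsq' : 0 ≤ μ^2*a - 2*μ*(μ-lam)*b + (μ-lam)^2*c := by
    have hcong : ∀ i ∈ Finset.univ, (μ * w i - (μ - lam) * y i)^2
        = μ^2 * w i^2 - 2*μ*(μ-lam)*(w i * y i) + (μ-lam)^2 * y i^2 := by
      intro i _; ring
    rw [Finset.sum_congr rfl hcong, Finset.sum_add_distrib, Finset.sum_sub_distrib,
      ← Finset.mul_sum, ← Finset.mul_sum, ← Finset.mul_sum, ← hadef, ← hbdef, ← hcdef] at hsq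
    exact hsq
  -- μ a ≤ (μ - lam) b
  have hmab : μ * a ≤ (μ - lam) * b := by
    have h1 : lam * b ≤ lam * (μ * s) := mul_le_mul_of_nonneg_left hbs (le_of_lt hlam)
    have h2 : lam * s = b - a := by linarith
    nlinarith [h2]
  -- main quadratic bound
  have hmain : μ^2 * a ≤ (μ - lam)^2 * c := by nlinarith [hmab, hsq', hμ]
  -- finish
  have hvec : lam⁻¹ • (y - w) - lam⁻¹ • y = fun i => -(lam⁻¹ * w i) := by
    funext i
    simp [smul_sub]
  rw [hvec, lpNorm_two, lpNorm_two]
  have hrhs : |μ⁻¹ - lam⁻¹| * Real.sqrt (∑ i, y i ^2)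
      = Real.sqrt ((μ⁻¹ - lam⁻¹)^2 * c) := by
    rw [Real.sqrt_mul (sq_nonneg _), Real.sqrt_sq_eq_abs, hcdef]
  rw [hrhs]
  apply Real.sqrt_le_sqrt
  have hsum : ∑ i, (-(lam⁻¹ * w i))^2 = lam⁻¹^2 * a := by
    rw [hadef, Finset.mul_sum]; congr 1; ext i; ring
  rw [hsum]
  have hexp : (μ⁻¹ - lam⁻¹)^2 = (μ - lam)^2 / (μ^2 * lam^2) := by
    field_simp
    ring
  rw [hexp]
  rw [div_mul_eq_mul_div, le_div_iff₀ (by positivity)]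
  calc lam⁻¹^2 * a * (μ^2 * lam^2) = μ^2 * a := by field_simp
    _ ≤ (μ - lam)^2 * c := hmain
end
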